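/- For every ideal Q′ with Q′ ⊆ Q and every integer i ≥ 2, one has (J + Q′)^i = J^i. -/
import Mathlib


open MvPolynomial

/-- The monomial `μ = x₁ᵗ ⋯ xₙᵗ`. -/
noncomputable def mu (K : Type*) [Field K] (n t : ℕ) : MvPolynomial (Fin n) K :=
  ∏ i : Fin n, X i ^ t

/-- The skeleton ideal `J = ⟨x₁^{4t},…,xₙ^{4t}, x₁^{2t}μ,…,xₙ^{2t}μ⟩`. -/
noncomputable def Jidl (K : Type*) [Field K] (n t : ℕ) : Ideal (MvPolynomial (Fin n) K) :=
  Ideal.span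
    ((Set.range fun j : Fin n => (X j : MvPolynomial (Fin n) K) ^ (4 * t)) ∪
     (Set.range fun j : Fin n => (X j : MvPolynomial (Fin n) K) ^ (2 * t) * mu K n t))

/-- The monomial `q = μ² = x₁^{2t} ⋯ xₙ^{2t}`. -/
noncomputable def qmon (K : Type*) [Field K] (n t : ℕ) : MvPolynomial (Fin n) K :=
  ∏ i : Fin n, X i ^ (2 * t)

/-- The principal ideal `Q = ⟨q⟩`. -/
noncomputable def Qidl (K : Type*) [Field K] (n t : ℕ) : Ideal (MvPolynomial (Fin n) K) :=
  Ideal.span {qmon K n t}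

/-- Auxiliary: the monomial with exponent vector `d`. -/
noncomputable def Pmon (K : Type*) [Field K] (n : ℕ) (d : Fin n → ℕ) :
    MvPolynomial (Fin n) K :=
  ∏ i : Fin n, X i ^ d i

lemma Pmon_mul (K : Type*) [Field K] (n : ℕ) (d e : Fin n → ℕ) :
    Pmon K n d * Pmon K n e = Pmon K n (d + e) := by
  simp [Pmon, ← Finset.prod_mul_distrib, pow_add]

lemma Xpow_eq_Pmon (K : Type*) [Field K] (n : ℕ) (j : Fin n) (a : ℕ) :
    (X j : MvPolynomial (Fin n) K) ^ a = Pmon K n (fun i => if i = j then a else 0) := by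
  rw [Pmon]
  have h : ∀ i : Fin n, (X i : MvPolynomial (Fin n) K) ^ (if i = j then a else 0)
      = if i = j then (X j : MvPolynomial (Fin n) K) ^ a else 1 := by
    intro i; split <;> simp_all
  simp only [h, Finset.prod_ite_eq', Finset.mem_univ, if_true]

lemma mu_eq_Pmon (K : Type*) [Field K] (n t : ℕ) : mu K n t = Pmon K n (fun _ => t) := rfl

lemma qmon_eq_Pmon (K : Type*) [Field K] (n t : ℕ) :
    qmon K n t = Pmon K n (fun _ => 2 * t) := rfl

lemma Pmon_eq (K : Type*) [Field K] (n : ℕ) {d e : Fin n → ℕ} (h : d = e) :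
    Pmon K n d = Pmon K n e := by rw [h]

lemma mem_J_pow4 (K : Type*) [Field K] (n t : ℕ) (j : Fin n) :
    (X j : MvPolynomial (Fin n) K) ^ (4 * t) ∈ Jidl K n t :=
  Ideal.subset_span (Set.mem_union_left _ ⟨j, rfl⟩)

lemma mem_J_mu (K : Type*) [Field K] (n t : ℕ) (j : Fin n) :
    (X j : MvPolynomial (Fin n) K) ^ (2 * t) * mu K n t ∈ Jidl K n t :=
  Ideal.subset_span (Set.mem_union_right _ ⟨j, rfl⟩)

lemma QJ_le (K : Type*) [Field K] (n t : ℕ) (hn : 2 ≤ n) :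
    Qidl K n t * Jidl K n t ≤ (Jidl K n t) ^ 2 := by
  conv_lhs => rw [Qidl, Jidl, Ideal.span_mul_span']
  rw [Ideal.span_le]
  rintro x hx
  rw [Set.mem_mul] at hx
  obtain ⟨a, ha, g, hg, rfl⟩ := hx
  rw [Set.mem_singleton_iff] at ha
  subst ha
  rcases hg with ⟨j, rfl⟩ | ⟨j, rfl⟩
  · -- q * x_j^{4t} = (x_j^{2t} μ)^2
    have heq : qmon K n t * (X j : MvPolynomial (Fin n) K) ^ (4 * t)
        = ((X j : MvPolynomial (Fin n) K) ^ (2 * t) * mu K n t)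
          * ((X j : MvPolynomial (Fin n) K) ^ (2 * t) * mu K n t) := by
      rw [qmon_eq_Pmon, mu_eq_Pmon, Xpow_eq_Pmon, Xpow_eq_Pmon]
      simp only [Pmon_mul]
      refine Pmon_eq K n ?_
      funext i
      simp only [Pi.add_apply]
      split_ifs <;> (try simp_all) <;> omega
    rw [heq, sq]
    exact Ideal.mul_mem_mul (mem_J_mu K n t j) (mem_J_mu K n t j)
  · -- q * (x_j^{2t} μ) = c * (x_j^{4t} * (x_k^{2t} μ))
    have : Nontrivial (Fin n) := Fin.nontrivial_iff_two_le.mpr hn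
    obtain ⟨k, hk⟩ := exists_ne j
    have heq : qmon K n t * ((X j : MvPolynomial (Fin n) K) ^ (2 * t) * mu K n t)
        = Pmon K n (fun i => if i = j ∨ i = k then 0 else 2 * t)
          * ((X j : MvPolynomial (Fin n) K) ^ (4 * t)
            * ((X k : MvPolynomial (Fin n) K) ^ (2 * t) * mu K n t)) := by
      rw [qmon_eq_Pmon, mu_eq_Pmon, Xpow_eq_Pmon, Xpow_eq_Pmon, Xpow_eq_Pmon]
      simp only [Pmon_mul]
      refine Pmon_eq K n ?_
      funext i
      simp only [Pi.add_apply]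
      split_ifs <;> simp_all [Ne.symm hk] <;> omega
    rw [heq, sq]
    exact Ideal.mul_mem_left _ _
      (Ideal.mul_mem_mul (mem_J_pow4 K n t j) (mem_J_mu K n t k))

lemma QQ_le (K : Type*) [Field K] (n t : ℕ) (hn : 2 ≤ n) :
    Qidl K n t * Qidl K n t ≤ (Jidl K n t) ^ 2 := by
  rw [Ideal.mul_le]
  intro r hr s hs
  rw [Qidl, Ideal.mem_span_singleton] at hr hs
  obtain ⟨c, rfl⟩ := hr
  obtain ⟨d, rfl⟩ := hs
  have h01 : (⟨0, by omega⟩ : Fin n) ≠ ⟨1, by omega⟩ := by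
    simp [Fin.ext_iff]
  set j0 : Fin n := ⟨0, by omega⟩
  set j1 : Fin n := ⟨1, by omega⟩
  have heq : qmon K n t * qmon K n t
      = Pmon K n (fun i => if i = j0 ∨ i = j1 then 0 else 4 * t)
        * ((X j0 : MvPolynomial (Fin n) K) ^ (4 * t)
          * (X j1 : MvPolynomial (Fin n) K) ^ (4 * t)) := by
    rw [qmon_eq_Pmon, Xpow_eq_Pmon, Xpow_eq_Pmon]
    simp only [Pmon_mul]
    refine Pmon_eq K n ?_
    funext i
    simp only [Pi.add_apply]
    split_ifs <;> simp_all [Ne.symm h01] <;> omega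
  have hre : qmon K n t * c * (qmon K n t * d)
      = (c * d) * (qmon K n t * qmon K n t) := by ring
  rw [hre, heq, sq]
  exact Ideal.mul_mem_left _ _ (Ideal.mul_mem_left _ _
    (Ideal.mul_mem_mul (mem_J_pow4 K n t j0) (mem_J_pow4 K n t j1)))

/-- Adding to `J` any ideal `Q′ ⊆ Q` does not change powers `≥ 2`:
`(J + Q′)^i = J^i` for all `i ≥ 2`. -/
theorem add_subideal_of_Q_powers_eq (K : Type*) [Field K] (n t : ℕ)
    (hn : 2 ≤ n) (ht : 1 ≤ t)
    (Q' : Ideal (MvPolynomial (Fin n) K)) (hQ' : Q' ≤ Qidl K n t) :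
    ∀ i : ℕ, 2 ≤ i → (Jidl K n t ⊔ Q') ^ i = (Jidl K n t) ^ i := by
  set J := Jidl K n t
  have hQJ : Q' * J ≤ J ^ 2 :=
    le_trans (Ideal.mul_mono hQ' le_rfl) (QJ_le K n t hn)
  have hQQ : Q' * Q' ≤ J ^ 2 :=
    le_trans (Ideal.mul_mono hQ' hQ') (QQ_le K n t hn)
  have hJQ : J * Q' ≤ J ^ 2 := by rw [mul_comm]; exact hQJ
  have base : (J ⊔ Q') ^ 2 = J ^ 2 := by
    refine le_antisymm ?_ (Ideal.pow_right_mono le_sup_left 2)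
    rw [sq, Ideal.sup_mul, Ideal.mul_sup, Ideal.mul_sup]
    refine sup_le (sup_le ?_ hJQ) (sup_le hQJ hQQ)
    rw [sq]
  intro i hi
  induction i, hi using Nat.le_induction with
  | base => exact base
  | succ m hm ih =>
      refine le_antisymm ?_ (Ideal.pow_right_mono le_sup_left _)
      rw [pow_succ', pow_succ', ih, Ideal.sup_mul]
      refine sup_le le_rfl ?_
      obtain ⟨k, rfl⟩ : ∃ k, m = k + 1 := ⟨m - 1, by omega⟩
      calc Q' * J ^ (k + 1) = (Q' * J) * J ^ k := by rw [pow_succ']; ring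
        _ ≤ J ^ 2 * J ^ k := Ideal.mul_mono hQJ le_rfl
        _ = J * J ^ (k + 1) := by rw [← pow_add, show 2 + k = k + 1 + 1 by omega, pow_succ']
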